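/- For all integers g ≥ 2 and n ≥ 0, g(g-1)·N^{FLS}_{g,n} = (n+g-1)·N_{g,n}. Here N_{g,n} = g · Σ_{(k_1,…,k_{g-1}) ∈ ℤ_{>0}^{g-1}, Σ k_i = n+g-1} ∏_{i=1}^{g-1} k_i σ(k_i) and N^{FLS}_{g,n} = Σ_{(k_1,…,k_{g-1}) ∈ ℤ_{>0}^{g-1}, Σ k_i = n+g-1} k_{g-1}² σ(k_{g-1}) ∏_{i=1}^{g-2} k_i σ(k_i). -/

import Mathlib

/-!
Every summand of `N^{FLS}_{g,n}` is `k_{g-1}` times the corresponding summand `∏ kᵢ σ(kᵢ)` of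
`N_{g,n} / g`. Since the index set and `∏ kᵢ σ(kᵢ)` are invariant under permuting the `g - 1`
coordinates, the weight `k_{g-1}` may be replaced by any `kⱼ`; averaging over `j` replaces it
by `(Σ kᵢ) / (g - 1) = (n + g - 1) / (g - 1)`.
-/

open Finset

/-- σ(k): the sum of the positive divisors of `k`, as a rational number. -/
noncomputable def sigma' (k : ℕ) : ℚ := ∑ d ∈ k.divisors, (d : ℚ)

/-- `N g n = g · Σ_{(k₁,…,k_{g-1}) ∈ ℤ_{>0}^{g-1}, Σ kᵢ = n+g-1} ∏ᵢ kᵢ σ(kᵢ)`. -/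
noncomputable def N (g n : ℕ) : ℚ :=
  (g : ℚ) *
    ∑ k ∈ (Finset.Nat.antidiagonalTuple (g - 1) (n + g - 1)).filter (fun k => ∀ i, 0 < k i),
      ∏ i, (k i : ℚ) * sigma' (k i)

section Symmetrization

variable {ι M R : Type*} [DecidableEq ι] [CommSemiring R]
  {s : Finset (ι → M)} {f : (ι → M) → R}

theorem Finset.sum_apply_mul_eq_of_comp_perm_mem (hs : ∀ σ : Equiv.Perm ι, ∀ k ∈ s, k ∘ σ ∈ s)
    (hf : ∀ (σ : Equiv.Perm ι) k, f (k ∘ σ) = f k) (h : M → R) (i j : ι) :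
    ∑ k ∈ s, h (k i) * f k = ∑ k ∈ s, h (k j) * f k := by
  have swap_swap (k : ι → M) : k ∘ Equiv.swap i j ∘ Equiv.swap i j = k := by
    funext x; simp
  refine sum_nbij' (· ∘ Equiv.swap i j) (· ∘ Equiv.swap i j) (hs _) (hs _)
    (fun k _ => swap_swap k) (fun k _ => swap_swap k) fun k _ => ?_
  simp [hf]

theorem Finset.card_mul_sum_apply_mul_of_comp_perm_mem [Fintype ι]
    (hs : ∀ σ : Equiv.Perm ι, ∀ k ∈ s, k ∘ σ ∈ s) (hf : ∀ (σ : Equiv.Perm ι) k, f (k ∘ σ) = f k)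
    (h : M → R) (j : ι) :
    (Fintype.card ι : R) * ∑ k ∈ s, h (k j) * f k = ∑ k ∈ s, (∑ i, h (k i)) * f k := by
  simp_rw [sum_mul]
  rw [sum_comm, ← nsmul_eq_mul, ← card_univ, ← sum_const]
  exact sum_congr rfl fun i _ => (sum_apply_mul_eq_of_comp_perm_mem hs hf h i j).symm

end Symmetrization

theorem Finset.Nat.comp_perm_mem_filter_antidiagonalTuple {m n : ℕ} (σ : Equiv.Perm (Fin m))
    {k : Fin m → ℕ} (hk : k ∈ (antidiagonalTuple m n).filter (fun k => ∀ i, 0 < k i)) :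
    k ∘ σ ∈ (antidiagonalTuple m n).filter (fun k => ∀ i, 0 < k i) := by
  simp only [mem_filter, mem_antidiagonalTuple] at hk ⊢
  exact ⟨(Equiv.sum_comp σ k).trans hk.1, fun i => hk.2 (σ i)⟩

theorem Finset.Nat.mul_sum_filter_antidiagonalTuple_apply_mul {R : Type*} [CommSemiring R]
    (m n : ℕ) (j : Fin m) {f : (Fin m → ℕ) → R} (hf : ∀ (σ : Equiv.Perm (Fin m)) k, f (k ∘ σ) = f k) :
    (m : R) * ∑ k ∈ (antidiagonalTuple m n).filter (fun k => ∀ i, 0 < k i), (k j : R) * f k =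
      n * ∑ k ∈ (antidiagonalTuple m n).filter (fun k => ∀ i, 0 < k i), f k := by
  have h := card_mul_sum_apply_mul_of_comp_perm_mem
    (fun σ _ => comp_perm_mem_filter_antidiagonalTuple (n := n) σ) hf (fun x : ℕ => (x : R)) j
  rw [Fintype.card_fin] at h
  rw [h, mul_sum]
  refine sum_congr rfl fun k hk => ?_
  rw [← (mem_antidiagonalTuple.mp (mem_filter.mp hk).1), Nat.cast_sum]

/-- `g(g-1)·N^{FLS}_{g,n} = (n+g-1)·N_{g,n}`, where `N^{FLS}_{g,n}` is the sum over
positive `(g-1)`-tuples `(k₁,…,k_{g-1})` with `Σ kᵢ = n+g-1` of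
`k_{g-1}² σ(k_{g-1}) ∏_{i=1}^{g-2} kᵢ σ(kᵢ)`. -/
theorem stmt_6 (g n : ℕ) (hg : 2 ≤ g) :
    (g : ℚ) * ((g : ℚ) - 1) *
      (∑ k ∈ (Finset.Nat.antidiagonalTuple (g - 1) (n + g - 1)).filter (fun k => ∀ i, 0 < k i),
        ((k ⟨g - 2, by omega⟩ : ℚ) ^ 2 * sigma' (k ⟨g - 2, by omega⟩)) *
          ∏ i ∈ Finset.univ.erase (⟨g - 2, by omega⟩ : Fin (g - 1)),
            (k i : ℚ) * sigma' (k i)) =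
    ((n : ℚ) + (g : ℚ) - 1) * N g n := by
  set last : Fin (g - 1) := ⟨g - 2, by omega⟩
  have summand_eq (k : Fin (g - 1) → ℕ) :
      (k last : ℚ) ^ 2 * sigma' (k last) * ∏ i ∈ univ.erase last, (k i : ℚ) * sigma' (k i) =
        k last * ∏ i, (k i : ℚ) * sigma' (k i) := by
    rw [← mul_prod_erase univ (fun i => (k i : ℚ) * sigma' (k i)) (mem_univ last)]
    ring
  have symmetrize := Nat.mul_sum_filter_antidiagonalTuple_apply_mul (g - 1) (n + g - 1) last
    (f := fun k => ∏ i, (k i : ℚ) * sigma' (k i))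
    fun σ k => Equiv.prod_comp σ fun i => (k i : ℚ) * sigma' (k i)
  rw [Nat.cast_sub (by omega), Nat.cast_sub (by omega)] at symmetrize
  rw [sum_congr rfl fun k _ => summand_eq k, N]
  push_cast at symmetrize
  linear_combination (g : ℚ) * symmetrize
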